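/- arXiv:1503.08579 — 2 statements merged into one kernel-verified Lean document; each statement's English description precedes it below -/
import Mathlib

section
/- Every element of the group generated by V_{k,3} and ρ_{12} can be written in the form V_{k,3}^s · (ρ_{12}V_{k,3}ρ_{12})^t · ρ_{12}^u with 0 ≤ s,t < k and u ∈ {0,1}. -/
open Matrix Complex

noncomputable def σ : Fin 3 → Matrix (Fin 2) (Fin 2) ℂ
  | 0 => !![0, 1; 1, 0]
  | 1 => !![0, -I; I, 0]
  | 2 => !![1, 0; 0, -1]

noncomputable def ω (k : ℕ) : ℂ := Complex.exp (2 * Real.pi * I / k)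

noncomputable def V (k : ℕ) (a : Fin 3) : Matrix (Fin 2) (Fin 2) ℂ :=
  (1 / 2 : ℂ) • ((1 + ω k) • (1 : Matrix (Fin 2) (Fin 2) ℂ) + (1 - ω k) • σ a)

noncomputable def ρ (a b : Fin 3) : Matrix (Fin 2) (Fin 2) ℂ :=
  ((Real.sqrt 2 : ℂ))⁻¹ • (σ a + σ b)

/-- The subgroup of invertible 2×2 complex matrices generated by the units
whose underlying matrices lie in `S`. -/
noncomputable def G (S : Set (Matrix (Fin 2) (Fin 2) ℂ)) :
    Subgroup (Matrix (Fin 2) (Fin 2) ℂ)ˣ :=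
  Subgroup.closure {u : (Matrix (Fin 2) (Fin 2) ℂ)ˣ | (u : Matrix (Fin 2) (Fin 2) ℂ) ∈ S}

/-- Levi-Civita symbol (on `Fin 3`; differences agree with the 1,2,3 convention). -/
def ε (a b c : Fin 3) : ℤ :=
  ((a : ℤ) - (b : ℤ)) * ((b : ℤ) - (c : ℤ)) * ((c : ℤ) - (a : ℤ)) / 2

lemma diag2 (a b : ℂ) : !![a, 0; 0, b] = Matrix.diagonal ![a, b] := by
  ext i j
  fin_cases i <;> fin_cases j <;> simp [Matrix.diagonal]

lemma hVdiag (k : ℕ) : V k 2 = !![1, 0; 0, ω k] := by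
  ext i j
  fin_cases i <;> fin_cases j <;>
    simp [V, σ, Matrix.one_apply, smul_eq_mul] <;> ring

lemma sqrt2_mul : ((Real.sqrt 2 : ℂ)) * ((Real.sqrt 2 : ℂ)) = 2 := by
  norm_cast
  rw [Real.mul_self_sqrt (by norm_num)]

lemma hR2 : ρ 0 1 * ρ 0 1 = 1 := by
  have h := sqrt2_mul
  have hI := Complex.I_mul_I
  ext i j
  fin_cases i <;> fin_cases j <;>
    simp [ρ, σ, Matrix.mul_apply, Fin.sum_univ_two, Matrix.one_apply, smul_eq_mul] <;>
    field_simp <;> linear_combination -h - hI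

lemma hWdiag (k : ℕ) : ρ 0 1 * V k 2 * ρ 0 1 = !![ω k, 0; 0, 1] := by
  have h := sqrt2_mul
  have hI := Complex.I_mul_I
  rw [hVdiag]
  ext i j
  fin_cases i <;> fin_cases j <;>
    simp [ρ, σ, Matrix.mul_apply, Fin.sum_univ_two, smul_eq_mul] <;>
    field_simp <;>
    first
      | linear_combination -(ω k) * h - (ω k) * hI
      | linear_combination -h - hI

lemma hωk (k : ℕ) (hk : 1 ≤ k) : ω k ^ k = 1 := by
  rw [ω, ← Complex.exp_nat_mul]
  have hk0 : (k : ℂ) ≠ 0 := Nat.cast_ne_zero.mpr (by omega)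
  rw [show (k : ℂ) * (2 * Real.pi * I / k) = 2 * Real.pi * I by field_simp]
  exact Complex.exp_two_pi_mul_I

theorem stmt13 (k : ℕ) (hk : 1 ≤ k) (g : (Matrix (Fin 2) (Fin 2) ℂ)ˣ)
    (hg : g ∈ G {V k 2, ρ 0 1}) :
    ∃ s t u : ℕ, s < k ∧ t < k ∧ u < 2 ∧
      (g : Matrix (Fin 2) (Fin 2) ℂ) =
        V k 2 ^ s * (ρ 0 1 * V k 2 * ρ 0 1) ^ t * ρ 0 1 ^ u := by
  set Vm : Matrix (Fin 2) (Fin 2) ℂ := V k 2 with hVm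
  set Rm : Matrix (Fin 2) (Fin 2) ℂ := ρ 0 1 with hRm
  set Wm : Matrix (Fin 2) (Fin 2) ℂ := Rm * Vm * Rm with hWm
  have hg' : g ∈ Subgroup.closure {u : (Matrix (Fin 2) (Fin 2) ℂ)ˣ |
      (u : Matrix (Fin 2) (Fin 2) ℂ) ∈ ({Vm, Rm} : Set _)} := hg
  have hR : Rm * Rm = 1 := hR2
  have hc : Commute Vm Wm := by
    rw [hVm, hWm, hRm, hVdiag, hWdiag, Commute, SemiconjBy, diag2, diag2,
      Matrix.diagonal_mul_diagonal, Matrix.diagonal_mul_diagonal]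
    ext i
    fin_cases i <;> simp [mul_comm]
  have hVk : Vm ^ k = 1 := by
    rw [hVm, hVdiag, diag2, Matrix.diagonal_pow]
    have h1 : (![1, ω k]) ^ k = (1 : Fin 2 → ℂ) := by
      ext i
      fin_cases i <;> simp [hωk k hk]
    rw [h1]
    exact Matrix.diagonal_one
  have hWk : Wm ^ k = 1 := by
    rw [hWm, hRm, hVm, hWdiag, diag2, Matrix.diagonal_pow]
    have h1 : (![ω k, 1]) ^ k = (1 : Fin 2 → ℂ) := by
      ext i
      fin_cases i <;> simp [hωk k hk]
    rw [h1]
    exact Matrix.diagonal_one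
  have hRV : Rm * Vm = Wm * Rm := by
    rw [hWm, mul_assoc, mul_assoc, hR, mul_one]
  have hRW : Rm * Wm = Vm * Rm := by
    rw [hWm, ← mul_assoc, ← mul_assoc, hR, one_mul]
  have pushV : ∀ n : ℕ, Rm * Vm ^ n = Wm ^ n * Rm :=
    fun n => (SemiconjBy.pow_right hRV n)
  have pushW : ∀ n : ℕ, Rm * Wm ^ n = Vm ^ n * Rm :=
    fun n => (SemiconjBy.pow_right hRW n)
  have key : ∀ s t s' t' : ℕ,
      (Vm ^ s * Wm ^ t) * (Vm ^ s' * Wm ^ t') = Vm ^ (s + s') * Wm ^ (t + t') := by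
    intro s t s' t'
    have h1 : Wm ^ t * Vm ^ s' = Vm ^ s' * Wm ^ t := (hc.symm.pow_pow t s').eq
    calc (Vm ^ s * Wm ^ t) * (Vm ^ s' * Wm ^ t')
        = Vm ^ s * ((Wm ^ t * Vm ^ s') * Wm ^ t') := by simp [mul_assoc]
      _ = Vm ^ s * ((Vm ^ s' * Wm ^ t) * Wm ^ t') := by rw [h1]
      _ = Vm ^ (s + s') * Wm ^ (t + t') := by simp [pow_add, mul_assoc]
  have pushR : ∀ s t : ℕ, Rm * (Vm ^ s * Wm ^ t) = (Vm ^ t * Wm ^ s) * Rm := by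
    intro s t
    rw [← mul_assoc, pushV, mul_assoc, pushW, ← mul_assoc, (hc.pow_pow t s).eq]
  have emul : ∀ s : ℕ, s + s * (k - 1) = k * s := by
    intro s
    have h1 : k - 1 + 1 = k := by omega
    calc s + s * (k - 1) = s * ((k - 1) + 1) := by rw [Nat.mul_succ, Nat.add_comm]
      _ = k * s := by rw [h1, Nat.mul_comm]
  have hProd : ∀ s t : ℕ,
      (Vm ^ s * Wm ^ t) * (Vm ^ (s * (k-1)) * Wm ^ (t * (k-1))) = 1 := by
    intro s t
    rw [key, emul, emul, pow_mul, pow_mul, hVk, hWk, one_pow, one_pow, one_mul]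
  have main : ∃ s t : ℕ,
      ((g : Matrix (Fin 2) (Fin 2) ℂ) = Vm ^ s * Wm ^ t ∨
       (g : Matrix (Fin 2) (Fin 2) ℂ) = Vm ^ s * Wm ^ t * Rm) := by
    refine Subgroup.closure_induction
      (p := fun (x : (Matrix (Fin 2) (Fin 2) ℂ)ˣ) _ => ∃ s t : ℕ,
        ((x : Matrix (Fin 2) (Fin 2) ℂ) = Vm ^ s * Wm ^ t ∨
         (x : Matrix (Fin 2) (Fin 2) ℂ) = Vm ^ s * Wm ^ t * Rm)) ?_ ?_ ?_ ?_ hg'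
    · intro x hx
      simp only [Set.mem_setOf_eq, Set.mem_insert_iff, Set.mem_singleton_iff] at hx
      rcases hx with hx | hx
      · exact ⟨1, 0, Or.inl (by rw [hx, pow_one, pow_zero, mul_one])⟩
      · exact ⟨0, 0, Or.inr (by rw [hx, pow_zero, pow_zero, mul_one, one_mul])⟩
    · exact ⟨0, 0, Or.inl (by simp)⟩
    · rintro x y _ _ ⟨s, t, hx | hx⟩ ⟨a, b, hy | hy⟩
      · exact ⟨s + a, t + b, Or.inl (by rw [Units.val_mul, hx, hy, key])⟩
      · refine ⟨s + a, t + b, Or.inr ?_⟩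
        rw [Units.val_mul, hx, hy,
          show Vm ^ s * Wm ^ t * (Vm ^ a * Wm ^ b * Rm)
            = (Vm ^ s * Wm ^ t) * (Vm ^ a * Wm ^ b) * Rm by simp [mul_assoc], key]
      · refine ⟨s + b, t + a, Or.inr ?_⟩
        rw [Units.val_mul, hx, hy, mul_assoc, pushR, ← mul_assoc, key]
      · refine ⟨s + b, t + a, Or.inl ?_⟩
        rw [Units.val_mul, hx, hy]
        calc Vm ^ s * Wm ^ t * Rm * (Vm ^ a * Wm ^ b * Rm)
            = Vm ^ s * Wm ^ t * (Rm * (Vm ^ a * Wm ^ b)) * Rm := by simp [mul_assoc]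
          _ = Vm ^ s * Wm ^ t * ((Vm ^ b * Wm ^ a) * Rm) * Rm := by rw [pushR]
          _ = (Vm ^ s * Wm ^ t) * (Vm ^ b * Wm ^ a) * (Rm * Rm) := by simp [mul_assoc]
          _ = Vm ^ (s + b) * Wm ^ (t + a) := by rw [key, hR, mul_one]
    · rintro x _ ⟨s, t, hx | hx⟩
      · refine ⟨s * (k - 1), t * (k - 1), Or.inl ?_⟩
        rw [Matrix.coe_units_inv]
        apply Matrix.inv_eq_right_inv
        rw [hx, hProd]
      · refine ⟨t * (k - 1), s * (k - 1), Or.inr ?_⟩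
        rw [Matrix.coe_units_inv]
        apply Matrix.inv_eq_right_inv
        rw [hx]
        calc Vm ^ s * Wm ^ t * Rm * (Vm ^ (t * (k-1)) * Wm ^ (s * (k-1)) * Rm)
            = Vm ^ s * Wm ^ t * (Rm * (Vm ^ (t * (k-1)) * Wm ^ (s * (k-1)))) * Rm := by
              simp [mul_assoc]
          _ = Vm ^ s * Wm ^ t * ((Vm ^ (s * (k-1)) * Wm ^ (t * (k-1))) * Rm) * Rm := by
              rw [pushR]
          _ = (Vm ^ s * Wm ^ t) * (Vm ^ (s * (k-1)) * Wm ^ (t * (k-1))) * (Rm * Rm) := by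
              simp [mul_assoc]
          _ = 1 := by rw [hProd, hR, one_mul]
  obtain ⟨s, t, hform⟩ := main
  have hs : Vm ^ s = Vm ^ (s % k) := pow_eq_pow_mod s hVk
  have ht : Wm ^ t = Wm ^ (t % k) := pow_eq_pow_mod t hWk
  have hsk : s % k < k := Nat.mod_lt _ (by omega)
  have htk : t % k < k := Nat.mod_lt _ (by omega)
  rcases hform with hx | hx
  · exact ⟨s % k, t % k, 0, hsk, htk, by omega, by rw [pow_zero, mul_one, ← hs, ← ht, hx]⟩
  · exact ⟨s % k, t % k, 1, hsk, htk, by omega, by rw [pow_one, ← hs, ← ht, hx]⟩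
end

section
/- The field ℚ(ω_k, √2) does not contain i when 4 ∤ k; consequently, for ε_{abc} ≠ 0 with c = 2 and 4 ∤ k, the matrix ρ_{a2} is not an element of the group ⟨V_{k,a}, ρ_{ab}⟩, so ⟨V_{k,a}, ρ_{ab}⟩ ≠ ⟨V_{k,a}, ρ_{a2}⟩ where {a,b} = {1,3}. -/
/-!
Put `n = 8k` and `ζ = ω n`, so that `ω k = ζ ^ 8`, `ω 8 = ζ ^ k` and `√2 = ω 8 + ω 8 ^ 7`; thus
`ℚ(ω k, √2) ⊆ ℚ(ζ)`. As `4 ∤ k`, the Chinese remainder theorem gives `m ≡ 7 [MOD 8]` and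
`m ≡ 1 [MOD k]`, and `m` is coprime to `n`, so `ζ ↦ ζ ^ m` is an embedding of `ℚ(ζ)`. It fixes `ω k`
and `√2`, but sends `I = ω 8 ^ 2` to `I ^ 7 = -I`; hence `I ∉ ℚ(ω k, √2)`.

For `a, b ≠ 1` every entry of `V k a` and `ρ a b` lies in `ℚ(ω k, √2)`, hence so does every entry of
every element of the group they generate, whereas `√2 • ρ a 1 - σ a` has the entry `I`. Since
`ρ a 1` is an involution, it does lie in the group generated by `V k a` and `ρ a 1`.
-/

open Matrix Complex

open scoped IntermediateField

theorem exists_modEq_seven_modEq_one {k : ℕ} (h4 : ¬ 4 ∣ k) :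
    ∃ m, m ≡ 7 [MOD 8] ∧ m ≡ 1 [MOD k] := by
  have hgcd : 7 ≡ 1 [MOD Nat.gcd 8 k] := by
    have h8 : Nat.gcd 8 k ∣ 8 := Nat.gcd_dvd_left 8 k
    have h4' : ¬ 4 ∣ Nat.gcd 8 k := fun h => h4 (h.trans (Nat.gcd_dvd_right 8 k))
    have hle : Nat.gcd 8 k ≤ 8 := Nat.le_of_dvd (by norm_num) h8
    interval_cases h : Nat.gcd 8 k <;> first | decide | omega
  exact ⟨_, (Nat.chineseRemainder' hgcd).2⟩

open IntermediateField in
theorem IsPrimitiveRoot.exists_algHom_adjoin_pow {K : Type*} [Field K] [CharZero K] {ζ : K}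
    {n : ℕ} (hζ : IsPrimitiveRoot ζ n) (hn : 0 < n) {m : ℕ} (hm : m.Coprime n) :
    ∃ τ : ℚ⟮ζ⟯ →ₐ[ℚ] K, ∀ (x : K) (h : x ∈ ℚ⟮ζ⟯) (j : ℕ), x = ζ ^ j → τ ⟨x, h⟩ = x ^ m := by
  have hint : IsIntegral ℚ ζ := (hζ.isIntegral hn).tower_top
  have hroot : ζ ^ m ∈ (minpoly ℚ ζ).aroots K := by
    rw [← Polynomial.cyclotomic_eq_minpoly_rat hζ hn, Polynomial.mem_aroots]
    refine ⟨Polynomial.cyclotomic_ne_zero n ℚ, ?_⟩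
    rw [Polynomial.aeval_def, Polynomial.eval₂_eq_eval_map, Polynomial.map_cyclotomic]
    exact (hζ.pow_of_coprime m hm).isRoot_cyclotomic hn
  let τ : ℚ⟮ζ⟯ →ₐ[ℚ] K := (algHomAdjoinIntegralEquiv ℚ hint).symm ⟨ζ ^ m, hroot⟩
  have hgen : τ (AdjoinSimple.gen ℚ ζ) = ζ ^ m := algHomAdjoinIntegralEquiv_symm_apply_gen ℚ hint _
  refine ⟨τ, fun x h j hx => ?_⟩
  subst hx
  calc τ ⟨ζ ^ j, h⟩ = τ (AdjoinSimple.gen ℚ ζ ^ j) := rfl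
    _ = (ζ ^ j) ^ m := by rw [map_pow, hgen, ← pow_mul, ← pow_mul, mul_comm]

theorem IntermediateField.exists_algHom_apply_eq_of_mem_adjoin {F K : Type*} [Field F] [Field K]
    [Algebra F K] {E : IntermediateField F K} (τ : E →ₐ[F] K) {S : Set K}
    (hS : ∀ s ∈ S, ∃ h : s ∈ E, τ ⟨s, h⟩ = s) {x : K} (hx : x ∈ adjoin F S) :
    ∃ h : x ∈ E, τ ⟨x, h⟩ = x := by
  let T : IntermediateField F K :=
    ((τ.equalizer E.val).toIntermediateField fun y (hy : τ y = y) =>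
      show τ y⁻¹ = E.val y⁻¹ by rw [map_inv₀, map_inv₀, hy]; rfl).map E.val
  have hST : adjoin F S ≤ T := adjoin_le_iff.mpr fun s hs => by
    obtain ⟨h, hs⟩ := hS s hs
    exact ⟨⟨s, h⟩, hs, rfl⟩
  obtain ⟨y, hy, rfl⟩ := hST hx
  exact ⟨y.2, hy⟩

theorem ω_mul_pow {c : ℕ} (hc : c ≠ 0) (d : ℕ) : ω (c * d) ^ c = ω d := by
  rw [ω, ω, ← Complex.exp_nat_mul]
  congr 1
  rcases eq_or_ne d 0 with rfl | hd
  · simp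
  · push_cast
    field_simp

theorem isPrimitiveRoot_ω {k : ℕ} (hk : k ≠ 0) : IsPrimitiveRoot (ω k) k :=
  isPrimitiveRoot_exp k hk

theorem ω_eight : ω 8 = Real.sqrt 2 / 2 * (1 + I) := by
  have harg : 2 * (Real.pi : ℂ) * I / ((8 : ℕ) : ℂ) = ((Real.pi / 4 : ℝ) : ℂ) * I := by
    push_cast; ring
  rw [ω, harg, Complex.exp_mul_I, ← Complex.ofReal_cos, ← Complex.ofReal_sin,
    Real.cos_pi_div_four, Real.sin_pi_div_four]
  push_cast
  ring

theorem ofReal_sqrt_two_sq : ((Real.sqrt 2 : ℝ) : ℂ) ^ 2 = 2 := by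
  rw [← Complex.ofReal_pow, Real.sq_sqrt zero_le_two]
  norm_num

theorem ω_eight_sq : ω 8 ^ 2 = I := by
  rw [ω_eight]
  linear_combination (1 + I) ^ 2 / 4 * ofReal_sqrt_two_sq + I_sq / 2

theorem ω_eight_add_pow_seven : ω 8 + ω 8 ^ 7 = Real.sqrt 2 := by
  have h7 : ω 8 ^ 7 = (ω 8 ^ 2) ^ 3 * ω 8 := by ring
  rw [h7, ω_eight_sq, ω_eight, pow_succ, I_sq]
  linear_combination (-(Real.sqrt 2 : ℂ) / 2) * I_sq

theorem I_pow_seven : I ^ 7 = -I := by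
  rw [show 7 = 4 + 3 by rfl, pow_add, I_pow_four, one_mul, pow_succ, I_sq]; ring

open IntermediateField in
theorem I_not_mem_adjoin_ω_sqrt_two {k : ℕ} (h4 : ¬ 4 ∣ k) :
    I ∉ IntermediateField.adjoin ℚ ({ω k, (Real.sqrt 2 : ℂ)} : Set ℂ) := by
  intro hI
  have hk : k ≠ 0 := by rintro rfl; exact h4 (dvd_zero 4)
  obtain ⟨m, hm8, hmk⟩ := exists_modEq_seven_modEq_one h4
  have hcop : m.Coprime (8 * k) := Nat.Coprime.mul_right
    (by rw [Nat.Coprime, hm8.gcd_eq]; rfl) (by rw [Nat.Coprime, hmk.gcd_eq, Nat.gcd_one_left])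
  have hζ : IsPrimitiveRoot (ω (8 * k)) (8 * k) := isPrimitiveRoot_ω (by positivity)
  obtain ⟨τ, hτ⟩ := hζ.exists_algHom_adjoin_pow (by positivity) hcop
  have hmem : ∀ j, ω (8 * k) ^ j ∈ ℚ⟮ω (8 * k)⟯ := pow_mem (mem_adjoin_simple_self ℚ _)
  have hωk : ω k = ω (8 * k) ^ 8 := (ω_mul_pow (by norm_num) k).symm
  have hω8 : ω 8 = ω (8 * k) ^ k := by rw [mul_comm, ω_mul_pow hk]
  have hω8_pow : ω 8 ^ 8 = 1 := by rw [show 8 = 2 * 4 from rfl, pow_mul, ω_eight_sq, I_pow_four]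
  have hm8' : 7 * m ≡ 1 [MOD 8] := (hm8.mul_left 7).trans rfl
  have hfix : ∀ s ∈ ({ω k, (Real.sqrt 2 : ℂ)} : Set ℂ),
      ∃ h : s ∈ ℚ⟮ω (8 * k)⟯, τ ⟨s, h⟩ = s := by
    rintro s (rfl | rfl)
    · refine ⟨hωk ▸ hmem 8, ?_⟩
      rw [hτ _ _ 8 hωk, pow_eq_pow_of_modEq hmk (isPrimitiveRoot_ω hk).pow_eq_one, pow_one]
    · have hs : (Real.sqrt 2 : ℂ) = ω 8 + ω 8 ^ 7 := ω_eight_add_pow_seven.symm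
      rw [hω8, ← pow_mul] at hs
      refine ⟨hs ▸ add_mem (hmem _) (hmem _), ?_⟩
      calc τ ⟨_, _⟩ = τ ⟨_, hmem k⟩ + τ ⟨_, hmem (k * 7)⟩ := by
            rw [← map_add]; exact congrArg τ (Subtype.ext hs)
        _ = ω 8 ^ m + ω 8 ^ (7 * m) := by
            rw [hτ _ _ _ rfl, hτ _ _ _ rfl, ← hω8, pow_mul, ← hω8, ← pow_mul]
        _ = ω 8 ^ 7 + ω 8 := by
            rw [pow_eq_pow_of_modEq hm8 hω8_pow, pow_eq_pow_of_modEq hm8' hω8_pow, pow_one]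
        _ = _ := by rw [add_comm, ω_eight_add_pow_seven]
  obtain ⟨hImem, hIfix⟩ := exists_algHom_apply_eq_of_mem_adjoin τ hfix hI
  have hI : I = ω (8 * k) ^ (k * 2) := by rw [pow_mul, ← hω8, ω_eight_sq]
  have hI_pow : I ^ 8 = 1 := by rw [show 8 = 4 * 2 from rfl, pow_mul, I_pow_four, one_pow]
  -- not `rw`: `τ` and `hIfix` see `ℚ⟮ω (8 * k)⟯` through two `Algebra ℚ` instances, equal only
  -- after unfolding
  have hI_pow_m : I ^ m = I := (hτ I hImem _ hI).symm.trans hIfix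
  rw [pow_eq_pow_of_modEq hm8 hI_pow, I_pow_seven] at hI_pow_m
  exact I_ne_zero (by linear_combination -hI_pow_m / 2)

theorem RingHom.map_nonsing_inv {n K L : Type*} [Fintype n] [DecidableEq n] [Field K] [Field L]
    (f : K →+* L) (A : Matrix n n K) : (f.mapMatrix A)⁻¹ = f.mapMatrix A⁻¹ := by
  simp only [Matrix.inv_def, ← f.map_det, ← f.map_adjugate, Ring.inverse_eq_inv, ← map_inv₀]
  ext i j
  simp

section unitsMatrix

variable {n K : Type*} [Fintype n] [DecidableEq n] [Field K]

theorem Subfield.nonsing_inv_mem_matrix {F : Subfield K} {A : Matrix n n K}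
    (hA : A ∈ F.toSubring.matrix) : A⁻¹ ∈ F.toSubring.matrix := by
  have hA' : A = F.subtype.mapMatrix (Matrix.of fun i j => ⟨A i j, hA i j⟩) := rfl
  rw [hA', RingHom.map_nonsing_inv]
  intro i j
  simp

def Subfield.unitsMatrix (F : Subfield K) : Subgroup (Matrix n n K)ˣ where
  carrier := {u | (u : Matrix n n K) ∈ F.toSubring.matrix}
  mul_mem' hu hv := F.toSubring.matrix.mul_mem hu hv
  one_mem' := F.toSubring.matrix.one_mem
  inv_mem' {u} hu := by
    simp only [Set.mem_ofPred_eq, Matrix.coe_units_inv]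
    exact Subfield.nonsing_inv_mem_matrix hu

end unitsMatrix

theorem G_le_unitsMatrix {F : Subfield ℂ} {S : Set (Matrix (Fin 2) (Fin 2) ℂ)}
    (hS : ∀ A ∈ S, A ∈ F.toSubring.matrix) : G S ≤ F.unitsMatrix :=
  (Subgroup.closure_le _).mpr fun u => hS u

section Pauli

variable {F : Subfield ℂ} {a b : Fin 3}

theorem σ_mem_matrix (ha : a ≠ 1) : σ a ∈ F.toSubring.matrix := by
  intro i j
  fin_cases a <;> fin_cases i <;> fin_cases j <;> simp_all [σ, F.neg_mem, F.one_mem]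

theorem V_mem_matrix {k : ℕ} (hω : ω k ∈ F) (ha : a ≠ 1) : V k a ∈ F.toSubring.matrix := by
  intro i j
  have hσ := σ_mem_matrix (F := F) ha i j
  simp only [V, Matrix.smul_apply, Matrix.add_apply, smul_eq_mul]
  have h1 : (1 : Matrix (Fin 2) (Fin 2) ℂ) i j ∈ F := F.toSubring.matrix.one_mem i j
  have h2 : (2 : ℂ)⁻¹ ∈ F := F.inv_mem (ofNat_mem F 2)
  rw [one_div]
  exact F.mul_mem h2 (F.add_mem (F.mul_mem (F.add_mem F.one_mem hω) h1)
    (F.mul_mem (F.sub_mem F.one_mem hω) hσ))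

theorem ρ_mem_matrix (h2 : (Real.sqrt 2 : ℂ) ∈ F) (ha : a ≠ 1) (hb : b ≠ 1) :
    ρ a b ∈ F.toSubring.matrix := fun i j =>
  F.mul_mem (F.inv_mem h2) (F.add_mem (σ_mem_matrix ha i j) (σ_mem_matrix hb i j))

theorem I_mem_of_ρ_mem_matrix (h2 : (Real.sqrt 2 : ℂ) ∈ F) (ha : a ≠ 1)
    (hρ : ρ a 1 ∈ F.toSubring.matrix) : I ∈ F := by
  have hI : I = Real.sqrt 2 * ρ a 1 1 0 - σ a 1 0 := by
    have : (Real.sqrt 2 : ℂ) ≠ 0 := by simp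
    simp [ρ, σ, this]
  rw [hI]
  exact F.sub_mem (F.mul_mem h2 (hρ 1 0)) (σ_mem_matrix ha 1 0)

theorem σ_mul_self (a : Fin 3) : σ a * σ a = 1 := by
  fin_cases a <;> ext i j <;> fin_cases i <;> fin_cases j <;> simp [σ]

theorem σ_mul_add_mul_σ {a b : Fin 3} (hab : a ≠ b) : σ a * σ b + σ b * σ a = 0 := by
  fin_cases a <;> fin_cases b <;> ext i j <;> fin_cases i <;> fin_cases j <;> simp_all [σ]

theorem ρ_mul_self (hab : a ≠ b) : ρ a b * ρ a b = 1 := by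
  have h2 : ((Real.sqrt 2 : ℂ))⁻¹ * ((Real.sqrt 2 : ℂ))⁻¹ = 2⁻¹ := by
    rw [← mul_inv, ← Complex.ofReal_mul, Real.mul_self_sqrt zero_le_two]; norm_num
  calc ρ a b * ρ a b = (((Real.sqrt 2 : ℂ))⁻¹ * ((Real.sqrt 2 : ℂ))⁻¹) •
      (σ a * σ a + σ b * σ b + (σ a * σ b + σ b * σ a)) := by
        simp only [ρ, smul_mul_smul_comm, add_mul, mul_add]; abel_nf
    _ = 1 := by
        rw [h2, σ_mul_self, σ_mul_self, σ_mul_add_mul_σ hab, add_zero, ← two_smul ℂ, smul_smul]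
        norm_num

end Pauli

theorem stmt19_general (k : ℕ) (h4 : ¬ (4 ∣ k)) :
    (Complex.I ∉ IntermediateField.adjoin ℚ ({ω k, (Real.sqrt 2 : ℂ)} : Set ℂ)) ∧
    ∀ a b : Fin 3, ((a = 0 ∧ b = 2) ∨ (a = 2 ∧ b = 0)) →
      (∀ u : (Matrix (Fin 2) (Fin 2) ℂ)ˣ,
          (u : Matrix (Fin 2) (Fin 2) ℂ) = ρ a 1 → u ∉ G {V k a, ρ a b}) ∧
      G {V k a, ρ a b} ≠ G {V k a, ρ a 1} := by
  have hI := I_not_mem_adjoin_ω_sqrt_two h4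
  refine ⟨hI, fun a b hab => ?_⟩
  obtain ⟨ha, hb⟩ : a ≠ 1 ∧ b ≠ 1 := by rcases hab with ⟨rfl, rfl⟩ | ⟨rfl, rfl⟩ <;> decide
  set F := (IntermediateField.adjoin ℚ ({ω k, (Real.sqrt 2 : ℂ)} : Set ℂ)).toSubfield
  have hω : ω k ∈ F := IntermediateField.subset_adjoin ℚ _ (Set.mem_insert _ _)
  have h2 : (Real.sqrt 2 : ℂ) ∈ F :=
    IntermediateField.subset_adjoin ℚ _ (Set.mem_insert_of_mem _ rfl)
  have hG : G {V k a, ρ a b} ≤ F.unitsMatrix := G_le_unitsMatrix <| by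
    rintro A (rfl | rfl)
    exacts [V_mem_matrix hω ha, ρ_mem_matrix h2 ha hb]
  have hnot : ∀ u : (Matrix (Fin 2) (Fin 2) ℂ)ˣ,
      (u : Matrix (Fin 2) (Fin 2) ℂ) = ρ a 1 → u ∉ G {V k a, ρ a b} := fun u hu hmem =>
    hI (I_mem_of_ρ_mem_matrix h2 ha (hu ▸ hG hmem))
  refine ⟨hnot, fun hGeq => hnot ⟨ρ a 1, ρ a 1, ρ_mul_self ha, ρ_mul_self ha⟩ rfl ?_⟩
  rw [hGeq]
  exact Subgroup.subset_closure (Set.mem_insert_of_mem _ rfl)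

theorem stmt19 (k : ℕ) (hk : 1 ≤ k) (h4 : ¬ (4 ∣ k)) :
    (Complex.I ∉ IntermediateField.adjoin ℚ ({ω k, (Real.sqrt 2 : ℂ)} : Set ℂ)) ∧
    ∀ a b : Fin 3, ((a = 0 ∧ b = 2) ∨ (a = 2 ∧ b = 0)) →
      (∀ u : (Matrix (Fin 2) (Fin 2) ℂ)ˣ,
          (u : Matrix (Fin 2) (Fin 2) ℂ) = ρ a 1 → u ∉ G {V k a, ρ a b}) ∧
      G {V k a, ρ a b} ≠ G {V k a, ρ a 1} :=
  stmt19_general k h4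
end
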